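/- Each rewrite step of R applied to a term containing no occurrence of e does not decrease the d-count, where the possible decrease could only come from the rules d·e→e and (d·x)·y→x·(y+x); in the latter case the loss of one d is compensated since every e-free term x satisfies dct(x) ≥ 1. -/

import Mathlib

/-- Ground terms over constants d, e with binary operations + (add) and · (app). -/
inductive Tm : Type
  | d : Tm
  | e : Tm
  | add : Tm → Tm → Tm
  | app : Tm → Tm → Tm
  deriving DecidableEq

open Tm

/-- Root rewrite steps: instances of the oriented rules. -/
inductive Root : Tm → Tm → Prop
  | addE (x) : Root (add x e) x
  | eAdd (x) : Root (add e x) x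
  | assoc (x y z) : Root (add (add x y) z) (add x (add y z))
  | appAdd (x y z) : Root (app (add x y) z) (app y (app x z))
  | appD (x y) : Root (app (app d x) y) (app x (add y x))
  | appE (x) : Root (app e x) x
  | dE : Root (app d e) e

/-- One rewrite step: a root step applied at some subterm position. -/
inductive Step : Tm → Tm → Prop
  | root {t u} : Root t u → Step t u
  | addL {t t' u} : Step t t' → Step (add t u) (add t' u)
  | addR {t u u'} : Step u u' → Step (add t u) (add t u')
  | appL {t t' u} : Step t t' → Step (app t u) (app t' u)
  | appR {t u u'} : Step u u' → Step (app t u) (app t u')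

/-- Zero or more rewrite steps. -/
def Steps : Tm → Tm → Prop := Relation.ReflTransGen Step

/-- A normal form is a term to which no rule applies. -/
def NormalForm (t : Tm) : Prop := ∀ u, ¬ Step t u

/-- Provable equality in the equational theory (reflexive symmetric transitive
congruence closure of the rule instances). -/
def TermEq : Tm → Tm → Prop := Relation.EqvGen Step

/-- The (reflexive) subterm relation. -/
inductive Subterm : Tm → Tm → Prop
  | refl (t) : Subterm t t
  | addL {s t u} : Subterm s t → Subterm s (add t u)
  | addR {s t u} : Subterm s u → Subterm s (add t u)
  | appL {s t u} : Subterm s t → Subterm s (app t u)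
  | appR {s t u} : Subterm s u → Subterm s (app t u)

/-- The d-count: number of occurrences of d. -/
def dct : Tm → ℕ
  | .d => 1
  | .e => 0
  | .add a b => dct a + dct b
  | .app a b => dct a + dct b

theorem one_le_dct_of_not_subterm_e : ∀ {x : Tm}, ¬ Subterm e x → 1 ≤ dct x
  | .d, _ => le_rfl
  | .e, h => absurd (Subterm.refl e) h
  | .add _ _, h => (one_le_dct_of_not_subterm_e fun hs => h hs.addL).trans (Nat.le_add_right _ _)
  | .app _ _, h => (one_le_dct_of_not_subterm_e fun hs => h hs.appL).trans (Nat.le_add_right _ _)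

namespace Root

theorem dct_le {t u : Tm} (hfree : ¬ Subterm e t) (h : Root t u) : dct t ≤ dct u := by
  cases h with
  | addE => exact absurd (Subterm.addR (Subterm.refl e)) hfree
  | eAdd => exact absurd (Subterm.addL (Subterm.refl e)) hfree
  | appE => exact absurd (Subterm.appL (Subterm.refl e)) hfree
  | dE => exact absurd (Subterm.appR (Subterm.refl e)) hfree
  | assoc | appAdd => simp only [dct]; omega
  | appD x y =>
    -- the duplicated `x` carries at least the one `d` that the step erases
    have hx : 1 ≤ dct x := one_le_dct_of_not_subterm_e fun hs => hfree hs.appR.appL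
    simp only [dct]; omega

end Root

namespace Step

theorem dct_le {t u : Tm} (hfree : ¬ Subterm e t) (h : Step t u) : dct t ≤ dct u := by
  induction h with
  | root h => exact h.dct_le hfree
  | addL _ ih => exact Nat.add_le_add_right (ih fun hs => hfree hs.addL) _
  | addR _ ih => exact Nat.add_le_add_left (ih fun hs => hfree hs.addR) _
  | appL _ ih => exact Nat.add_le_add_right (ih fun hs => hfree hs.appL) _
  | appR _ ih => exact Nat.add_le_add_left (ih fun hs => hfree hs.appR) _

end Step

theorem step_dct_mono :
    (∀ t u : Tm, ¬ Subterm e t → Step t u → dct t ≤ dct u) ∧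
    (∀ x : Tm, ¬ Subterm e x → 1 ≤ dct x) :=
  ⟨fun _ _ hfree h => h.dct_le hfree, fun _ => one_le_dct_of_not_subterm_e⟩
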